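/- arXiv:2112.02833 — 5 statements merged into one kernel-verified Lean document; each statement's English description precedes it below -/
import Mathlib

section
/- Let F and G be independent real-valued random variables with F distributed as N(μ_f, σ_f²) and G distributed as N(μ_g, σ_g²), where σ_f > 0 and σ_g > 0, and let a ∈ ℝ. Then E[max(a − F, 0) · 1{G ≤ 0}] = [(a − μ_f)·Φ((a − μ_f)/σ_f) + σ_f·φ((a − μ_f)/σ_f)] · Φ(−μ_g/σ_g). -/
/-!
The objective and constraint factors are functions of independent variables, so the expectation
splits into `E[max (a - F) 0] · P(G ≤ 0)`. Writing `F = μf + σf Z` with `Z ~ N(0,1)` reduces the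
first factor to `σf · E[max (t - Z) 0]` with `t = (a - μf)/σf`, and on `{Z ≤ t}` the integrand
`(t - z) φ(z)` integrates to `t Φ(t) + φ(t)` because `-z φ(z)` is the derivative of `φ`.
-/

open MeasureTheory ProbabilityTheory Real

/-- The cumulative distribution function of the standard normal distribution `N(0,1)`. -/
noncomputable def stdNormalCDF (t : ℝ) : ℝ := ((gaussianReal 0 1) (Set.Iic t)).toReal

/-- The probability density function of the standard normal distribution `N(0,1)`:
`φ(t) = (2π)^{-1/2} exp(-t²/2)`. -/
noncomputable def stdNormalPDF (t : ℝ) : ℝ :=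
  (2 * Real.pi) ^ (-(1 : ℝ) / 2) * Real.exp (-t ^ 2 / 2)

open Set Filter
open scoped Topology

lemma gaussianPDFReal_zero_one : gaussianPDFReal 0 1 = stdNormalPDF := by
  ext x
  rw [gaussianPDFReal, stdNormalPDF, NNReal.coe_one, mul_one, sub_zero, Real.sqrt_eq_rpow,
    ← Real.rpow_neg (by positivity)]
  simp only [neg_div, mul_one]

lemma integrable_stdNormalPDF : Integrable stdNormalPDF :=
  gaussianPDFReal_zero_one ▸ integrable_gaussianPDFReal 0 1

lemma stdNormalCDF_eq_integral (t : ℝ) : stdNormalCDF t = ∫ x in Iic t, stdNormalPDF x := by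
  rw [stdNormalCDF, gaussianReal_apply_eq_integral 0 one_ne_zero (Iic t),
    ENNReal.toReal_ofReal (integral_nonneg (gaussianPDFReal_nonneg 0 1)), gaussianPDFReal_zero_one]

lemma hasDerivAt_stdNormalPDF (x : ℝ) : HasDerivAt stdNormalPDF (-x * stdNormalPDF x) x := by
  have hexp : HasDerivAt (fun x : ℝ => -x ^ 2 / 2) (-x) x :=
    ((hasDerivAt_pow 2 x).neg.div_const 2).congr_deriv (by push_cast; ring)
  unfold stdNormalPDF
  exact (hexp.exp.const_mul ((2 * π) ^ (-(1 : ℝ) / 2))).congr_deriv (by ring)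

lemma tendsto_stdNormalPDF_atBot : Tendsto stdNormalPDF atBot (𝓝 0) := by
  have hsq : Tendsto (fun x : ℝ => x ^ 2) atBot atTop := by
    simpa [Function.comp_def] using
      (tendsto_pow_atTop two_ne_zero).comp (tendsto_neg_atBot_atTop (G := ℝ))
  have hexponent : Tendsto (fun x : ℝ => -x ^ 2 / 2) atBot atBot :=
    (tendsto_neg_atTop_atBot.comp hsq).atBot_div_const two_pos
  unfold stdNormalPDF
  simpa using (tendsto_exp_atBot.comp hexponent).const_mul ((2 * π) ^ (-(1 : ℝ) / 2))

lemma integrable_neg_mul_stdNormalPDF : Integrable fun x => -x * stdNormalPDF x := by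
  have h := (integrable_mul_exp_neg_mul_sq one_half_pos).const_mul (-(2 * π) ^ (-(1 : ℝ) / 2))
  convert h using 2 with x
  rw [stdNormalPDF]
  ring_nf

lemma integral_Iic_neg_mul_stdNormalPDF (t : ℝ) :
    ∫ x in Iic t, -x * stdNormalPDF x = stdNormalPDF t := by
  simpa using integral_Iic_of_hasDerivAt_of_tendsto' (fun x _ => hasDerivAt_stdNormalPDF x)
    integrable_neg_mul_stdNormalPDF.integrableOn tendsto_stdNormalPDF_atBot

lemma integral_max_sub_gaussianReal_zero_one (t : ℝ) :
    ∫ z, max (t - z) 0 ∂gaussianReal 0 1 = t * stdNormalCDF t + stdNormalPDF t := by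
  have hintegrand : (fun z => gaussianPDFReal 0 1 z • max (t - z) 0)
      = (Iic t).indicator fun z => t * stdNormalPDF z + -z * stdNormalPDF z := by
    ext z
    rw [gaussianPDFReal_zero_one, smul_eq_mul]
    by_cases hz : z ≤ t
    · rw [indicator_of_mem (mem_Iic.2 hz), max_eq_left (by linarith)]
      ring
    · rw [indicator_of_notMem (mt mem_Iic.1 hz), max_eq_right (by linarith), mul_zero]
  rw [integral_gaussianReal_eq_integral_smul one_ne_zero, hintegrand,
    integral_indicator measurableSet_Iic,
    integral_add (integrable_stdNormalPDF.const_mul t).integrableOn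
      integrable_neg_mul_stdNormalPDF.integrableOn,
    integral_const_mul, integral_Iic_neg_mul_stdNormalPDF, ← stdNormalCDF_eq_integral]

lemma gaussianReal_eq_map_mul_add (μ σ : ℝ) :
    gaussianReal μ (σ ^ 2).toNNReal = (gaussianReal 0 1).map fun z => σ * z + μ := by
  have hcomp : (fun z : ℝ => σ * z + μ) = (· + μ) ∘ (σ * ·) := rfl
  rw [hcomp, ← Measure.map_map (measurable_add_const μ) (measurable_const_mul σ),
    gaussianReal_map_const_mul, gaussianReal_map_add_const, mul_zero, zero_add, mul_one]
  congr
  ext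
  simp [sq_nonneg σ]

lemma gaussianReal_real_Iic {σ : ℝ} (hσ : 0 < σ) (μ t : ℝ) :
    (gaussianReal μ (σ ^ 2).toNNReal).real (Iic t) = stdNormalCDF ((t - μ) / σ) := by
  have hpre : (fun z : ℝ => σ * z + μ) ⁻¹' Iic t = Iic ((t - μ) / σ) := by
    ext z
    rw [mem_preimage, mem_Iic, mem_Iic, le_div_iff₀ hσ]
    constructor <;> intro h <;> linarith
  rw [gaussianReal_eq_map_mul_add, measureReal_def,
    Measure.map_apply (by fun_prop) measurableSet_Iic, hpre, stdNormalCDF]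

lemma integral_max_sub_gaussianReal {σ : ℝ} (hσ : 0 < σ) (μ a : ℝ) :
    ∫ x, max (a - x) 0 ∂gaussianReal μ (σ ^ 2).toNNReal
      = (a - μ) * stdNormalCDF ((a - μ) / σ) + σ * stdNormalPDF ((a - μ) / σ) := by
  have hscale (z : ℝ) : max (a - (σ * z + μ)) 0 = σ * max ((a - μ) / σ - z) 0 := by
    rw [mul_max_of_nonneg _ _ hσ.le, mul_zero, mul_sub, mul_div_cancel₀ _ hσ.ne']
    congr 1
    ring
  rw [gaussianReal_eq_map_mul_add, integral_map (by fun_prop) (by fun_prop)]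
  simp_rw [hscale]
  rw [integral_const_mul, integral_max_sub_gaussianReal_zero_one]
  field_simp

theorem stmt_2_general {Ω : Type*} [MeasurableSpace Ω] (P : Measure Ω)
    (F G : Ω → ℝ)
    (μf σf μg σg a : ℝ) (hσf : 0 < σf) (hσg : 0 < σg)
    (hF : P.map F = gaussianReal μf (Real.toNNReal (σf ^ 2)))
    (hG : P.map G = gaussianReal μg (Real.toNNReal (σg ^ 2)))
    (hind : IndepFun F G P) :
    ∫ ω, max (a - F ω) 0 * (if G ω ≤ 0 then (1 : ℝ) else 0) ∂P =
      ((a - μf) * stdNormalCDF ((a - μf) / σf) + σf * stdNormalPDF ((a - μf) / σf)) *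
        stdNormalCDF (-μg / σg) := by
  have hobj : Measurable fun x : ℝ => max (a - x) 0 := by fun_prop
  have hcon : Measurable fun x : ℝ => if x ≤ 0 then (1 : ℝ) else 0 :=
    measurable_const.ite measurableSet_Iic measurable_const
  have hcon_eq : (fun x : ℝ => if x ≤ 0 then (1 : ℝ) else 0) = (Iic 0).indicator 1 := by
    ext x
    simp [indicator_apply]
  have hFae : AEMeasurable F P := .of_map_ne_zero (hF ▸ IsProbabilityMeasure.ne_zero _)
  have hGae : AEMeasurable G P := .of_map_ne_zero (hG ▸ IsProbabilityMeasure.ne_zero _)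
  have hsplit := (hind.comp hobj hcon).integral_fun_mul_eq_mul_integral
    (hobj.comp_aemeasurable hFae).aestronglyMeasurable
    (hcon.comp_aemeasurable hGae).aestronglyMeasurable
  simp only [Function.comp_apply] at hsplit
  rw [hsplit, ← integral_map hFae hobj.aestronglyMeasurable,
    ← integral_map hGae hcon.aestronglyMeasurable, hF, hG, hcon_eq,
    integral_indicator_one measurableSet_Iic, integral_max_sub_gaussianReal hσf,
    gaussianReal_real_Iic hσg, zero_sub]

/-- For independent Gaussian `F ~ N(μf, σf²)` and `G ~ N(μg, σg²)` with `σf, σg > 0`,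
`E[max (a - F) 0 · 1{G ≤ 0}]
  = [(a - μf) Φ((a - μf)/σf) + σf φ((a - μf)/σf)] · Φ(-μg/σg)`. -/
theorem stmt_2 {Ω : Type*} [MeasurableSpace Ω] (P : Measure Ω) [IsProbabilityMeasure P]
    (F G : Ω → ℝ) (hFm : Measurable F) (hGm : Measurable G)
    (μf σf μg σg a : ℝ) (hσf : 0 < σf) (hσg : 0 < σg)
    (hF : P.map F = gaussianReal μf (Real.toNNReal (σf ^ 2)))
    (hG : P.map G = gaussianReal μg (Real.toNNReal (σg ^ 2)))
    (hind : IndepFun F G P) :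
    ∫ ω, max (a - F ω) 0 * (if G ω ≤ 0 then (1 : ℝ) else 0) ∂P =
      ((a - μf) * stdNormalCDF ((a - μf) / σf) + σf * stdNormalPDF ((a - μf) / σf)) *
        stdNormalCDF (-μg / σg) :=
  stmt_2_general P F G μf σf μg σg a hσf hσg hF hG hind
end

section
/- Let μ, σ : ℝ → ℝ be differentiable at x₀ with σ continuous and σ(x) > 0 for all x, and let γ be the standard normal distribution N(0,1) on ℝ. Define h(x) = γ({z ∈ ℝ : μ(x) + σ(x)·z ≤ 0}). Then: (i) h(x) = Φ(−μ(x)/σ(x)) for all x; (ii) h is differentiable at x₀ with h'(x₀) = −φ(μ(x₀)/σ(x₀)) · (σ(x₀)·μ'(x₀) − μ(x₀)·σ'(x₀)) / σ(x₀)²; and (iii) for γ-almost every z, the function x ↦ 1{μ(x) + σ(x)·z ≤ 0} has derivative 0 at x₀. Consequently, whenever σ(x₀)μ'(x₀) − μ(x₀)σ'(x₀) ≠ 0, the derivative of the expectation h'(x₀) differs from the expectation of the pathwise derivative, which is 0. -/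
open MeasureTheory ProbabilityTheory Real

/-- The probability of feasibility `h(x) = γ{z : μ(x) + σ(x)z ≤ 0}` under a standard
normal sample `z ~ γ = N(0,1)`. -/
noncomputable def feasProb (μ σ : ℝ → ℝ) (x : ℝ) : ℝ :=
  ((gaussianReal 0 1) {z : ℝ | μ x + σ x * z ≤ 0}).toReal

/-!
Since `σ > 0`, the feasible set `{z | μ x + σ x * z ≤ 0}` is the half-line
`Iic (-μ x / σ x)`, so `h = Φ ∘ (-μ / σ)` and the chain rule gives `h'`. Pathwise, the
indicator is locally constant at `x₀` unless `z` lies on the boundary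
`μ x₀ + σ x₀ * z = 0`, a single point and hence `γ`-null; all of `h'` comes from mass
crossing that boundary, which pathwise derivatives miss.
-/

open Filter Set Topology

theorem hasDerivAt_integral_Iic {E : Type*} [NormedAddCommGroup E] [NormedSpace ℝ E]
    [CompleteSpace E] {f : ℝ → E} {t : ℝ} (hf : Integrable f)
    (hft : ContinuousAt f t) : HasDerivAt (fun s => ∫ x in Iic s, f x) (f t) t := by
  have hsplit : ∀ s, ∫ x in Iic s, f x = (∫ x in Iic 0, f x) + ∫ x in (0 : ℝ)..s, f x :=
    fun s => eq_add_of_sub_eq'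
      (intervalIntegral.integral_Iic_sub_Iic hf.integrableOn hf.integrableOn)
  rw [funext hsplit]
  exact (intervalIntegral.integral_hasDerivAt_right hf.intervalIntegrable
    hf.aestronglyMeasurable.stronglyMeasurableAtFilter hft).const_add _

theorem hasDerivAt_gaussianReal_Iic (m : ℝ) {v : NNReal} (hv : v ≠ 0) (t : ℝ) :
    HasDerivAt (fun s => (gaussianReal m v (Iic s)).toReal) (gaussianPDFReal m v t) t := by
  have hcdf : ∀ s, (gaussianReal m v (Iic s)).toReal = ∫ x in Iic s, gaussianPDFReal m v x :=
    fun s => by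
      rw [gaussianReal_apply_eq_integral m hv,
        ENNReal.toReal_ofReal (integral_nonneg (gaussianPDFReal_nonneg m v))]
  rw [funext hcdf]
  exact hasDerivAt_integral_Iic (integrable_gaussianPDFReal m v)
    (by unfold gaussianPDFReal; fun_prop)

theorem stdNormalPDF_eq_gaussianPDFReal (t : ℝ) : stdNormalPDF t = gaussianPDFReal 0 1 t := by
  rw [stdNormalPDF, gaussianPDFReal, neg_div, Real.rpow_neg (by positivity),
    ← Real.sqrt_eq_rpow]
  norm_num

theorem stdNormalPDF_pos (t : ℝ) : 0 < stdNormalPDF t := by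
  rw [stdNormalPDF]; positivity

theorem stdNormalPDF_neg (t : ℝ) : stdNormalPDF (-t) = stdNormalPDF t := by
  simp only [stdNormalPDF, neg_sq]

theorem hasDerivAt_stdNormalCDF (t : ℝ) : HasDerivAt stdNormalCDF (stdNormalPDF t) t := by
  rw [stdNormalPDF_eq_gaussianPDFReal]
  exact hasDerivAt_gaussianReal_Iic 0 one_ne_zero t

theorem setOf_add_mul_nonpos_eq_Iic {a b : ℝ} (hb : 0 < b) :
    {z : ℝ | a + b * z ≤ 0} = Iic (-a / b) := by
  ext z
  rw [mem_ofPred_eq, mem_Iic, le_div_iff₀ hb]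
  constructor <;> intro h <;> linarith

theorem feasProb_eq {μ σ : ℝ → ℝ} {x : ℝ} (hσ : 0 < σ x) :
    feasProb μ σ x = stdNormalCDF (-μ x / σ x) := by
  rw [feasProb, setOf_add_mul_nonpos_eq_Iic hσ, stdNormalCDF]

theorem hasDerivAt_feasProb {μ σ : ℝ → ℝ} {x₀ μ' σ' : ℝ}
    (hμ : HasDerivAt μ μ' x₀) (hσ : HasDerivAt σ σ' x₀) (hσ₀ : 0 < σ x₀) :
    HasDerivAt (feasProb μ σ)
      (-stdNormalPDF (μ x₀ / σ x₀) * (σ x₀ * μ' - μ x₀ * σ') / σ x₀ ^ 2) x₀ := by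
  have hquot :
      HasDerivAt (fun x => -μ x / σ x) ((-μ' * σ x₀ - -μ x₀ * σ') / σ x₀ ^ 2) x₀ :=
    hμ.neg.div hσ hσ₀.ne'
  have hlocal : feasProb μ σ =ᶠ[𝓝 x₀] fun x => stdNormalCDF (-μ x / σ x) := by
    filter_upwards [hσ.continuousAt.eventually_const_lt hσ₀] with x hx using feasProb_eq hx
  refine (((hasDerivAt_stdNormalCDF _).comp x₀ hquot).congr_of_eventuallyEq hlocal).congr_deriv ?_
  rw [neg_div, stdNormalPDF_neg]
  ring

theorem hasDerivAt_ite_nonpos_of_ne_zero {f : ℝ → ℝ} {x₀ : ℝ} (hf : ContinuousAt f x₀)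
    (hx₀ : f x₀ ≠ 0) : HasDerivAt (fun x => if f x ≤ 0 then (1 : ℝ) else 0) 0 x₀ := by
  rcases hx₀.lt_or_gt with hneg | hpos
  · refine (hasDerivAt_const x₀ (1 : ℝ)).congr_of_eventuallyEq ?_
    filter_upwards [hf.eventually_lt_const hneg] with x hx
    simp [hx.le]
  · refine (hasDerivAt_const x₀ (0 : ℝ)).congr_of_eventuallyEq ?_
    filter_upwards [hf.eventually_const_lt hpos] with x hx
    simp [hx.not_ge]

theorem ae_add_mul_ne_zero {ρ : Measure ℝ} (hρ : ρ ≪ volume) (a : ℝ) {b : ℝ}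
    (hb : b ≠ 0) : ∀ᵐ z ∂ρ, a + b * z ≠ 0 := by
  filter_upwards [hρ.ae_le (Measure.ae_ne volume (-a / b))] with z hz hzero
  exact hz (by field_simp; linarith)

theorem stmt_5_general (μ σ : ℝ → ℝ) (x₀ μ' σ' : ℝ)
    (hμ : HasDerivAt μ μ' x₀) (hσd : HasDerivAt σ σ' x₀)
    (hσpos : ∀ x, 0 < σ x) :
    (∀ x, feasProb μ σ x = stdNormalCDF (-μ x / σ x)) ∧
      HasDerivAt (feasProb μ σ)
        (-stdNormalPDF (μ x₀ / σ x₀) * (σ x₀ * μ' - μ x₀ * σ') / σ x₀ ^ 2) x₀ ∧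
      (∀ᵐ z ∂(gaussianReal 0 1),
        HasDerivAt (fun x => if μ x + σ x * z ≤ 0 then (1 : ℝ) else 0) 0 x₀) ∧
      (σ x₀ * μ' - μ x₀ * σ' ≠ 0 → deriv (feasProb μ σ) x₀ ≠ 0) := by
  have hderiv := hasDerivAt_feasProb hμ hσd (hσpos x₀)
  refine ⟨fun x => feasProb_eq (hσpos x), hderiv, ?_, fun hne => ?_⟩
  · filter_upwards [ae_add_mul_ne_zero (gaussianReal_absolutelyContinuous 0 one_ne_zero) (μ x₀)
      (hσpos x₀).ne'] with z hz
    exact hasDerivAt_ite_nonpos_of_ne_zero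
      (hμ.continuousAt.add (hσd.continuousAt.mul continuousAt_const)) hz
  · rw [hderiv.deriv]
    exact div_ne_zero (mul_ne_zero (neg_ne_zero.mpr (stdNormalPDF_pos _).ne') hne)
      (pow_ne_zero 2 (hσpos x₀).ne')

/-- Failure of the IPA interchange for feasibility indicators: with `h(x) = γ{z : μ(x)+σ(x)z ≤ 0}`,
(i) `h(x) = Φ(-μ(x)/σ(x))`; (ii) `h` is differentiable at `x₀` with the stated derivative;
(iii) for `γ`-a.e. `z` the pathwise derivative of the indicator at `x₀` is `0`; consequently,
whenever `σ(x₀)μ'(x₀) - μ(x₀)σ'(x₀) ≠ 0`, the derivative of the expectation is nonzero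
(hence differs from the expectation `0` of the pathwise derivative). -/
theorem stmt_5 (μ σ : ℝ → ℝ) (x₀ μ' σ' : ℝ)
    (hμ : HasDerivAt μ μ' x₀) (hσd : HasDerivAt σ σ' x₀)
    (hσc : Continuous σ) (hσpos : ∀ x, 0 < σ x) :
    (∀ x, feasProb μ σ x = stdNormalCDF (-μ x / σ x)) ∧
      HasDerivAt (feasProb μ σ)
        (-stdNormalPDF (μ x₀ / σ x₀) * (σ x₀ * μ' - μ x₀ * σ') / σ x₀ ^ 2) x₀ ∧
      (∀ᵐ z ∂(gaussianReal 0 1),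
        HasDerivAt (fun x => if μ x + σ x * z ≤ 0 then (1 : ℝ) else 0) 0 x₀) ∧
      (σ x₀ * μ' - μ x₀ * σ' ≠ 0 → deriv (feasProb μ σ) x₀ ≠ 0) :=
  stmt_5_general μ σ x₀ μ' σ' hμ hσd hσpos
end

section
/- Let d, q ≥ 1 be natural numbers, let A ⊆ ℝ^d and S ⊆ (Fin q → ℝ^d) be compact sets, let μ : ℝ^d → ℝ and K : ℝ^d → ℝ^d → ℝ be continuous, and suppose that for every X ∈ S the q×q matrix K(X,X) with entries K(X_i, X_j) is invertible. Define the posterior mean m(x, X, y) = μ(x) + Σ_{i,j} K(x, X_i)·(K(X,X)⁻¹)_{ij}·(y_j − μ(X_j)) for x ∈ ℝ^d, X ∈ (Fin q → ℝ^d), y ∈ ℝ^q. Then there exist constants C₁, C₂ ≥ 0 such that for all x ∈ A, X ∈ S, and y ∈ ℝ^q: |m(x, X, y)| ≤ C₁ + C₂·‖y‖, where ‖y‖ is the Euclidean norm on ℝ^q. -/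
open scoped BigOperators

/-- The Gaussian process posterior mean at `x` with prior mean `μ` and kernel `K`,
conditioned on observing values `y` at the batch of points `X`:
`m(x, X, y) = μ(x) + Σᵢⱼ K(x, Xᵢ) (K(X,X)⁻¹)ᵢⱼ (yⱼ - μ(Xⱼ))`. -/
noncomputable def postMean {d q : ℕ}
    (μ : EuclideanSpace ℝ (Fin d) → ℝ)
    (K : EuclideanSpace ℝ (Fin d) → EuclideanSpace ℝ (Fin d) → ℝ)
    (x : EuclideanSpace ℝ (Fin d)) (X : Fin q → EuclideanSpace ℝ (Fin d))
    (y : EuclideanSpace ℝ (Fin q)) : ℝ :=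
  μ x + ∑ i, ∑ j,
    K x (X i) * ((Matrix.of fun i j => K (X i) (X j))⁻¹ i j) * (y j - μ (X j))

/-!
The posterior mean is affine in the observations, `m(x, X, y) = a(x, X) + Σⱼ wⱼ(x, X) yⱼ`, with
kriging weights `wⱼ(x, X) = Σᵢ K(x, Xᵢ) (K(X,X)⁻¹)ᵢⱼ`. Since `K(X,X)` is invertible on `S`, the
matrix inverse, and hence `a` and every `wⱼ`, is continuous on the compact set `A × S`, so these
coefficients are bounded there; bounding `|yⱼ| ≤ ‖y‖` gives the claim.
-/

theorem ContinuousOn.matrix_inv {α R ι : Type*} [TopologicalSpace α] [NormedCommRing R]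
    [HasSummableGeomSeries R] [Fintype ι] [DecidableEq ι] {A : α → Matrix ι ι R} {s : Set α}
    (hA : ContinuousOn A s) (hdet : ∀ a ∈ s, IsUnit (A a).det) :
    ContinuousOn (fun a => (A a)⁻¹) s := fun a ha => by
  obtain ⟨u, hu⟩ := hdet a ha
  exact (continuousAt_matrix_inv _ (hu ▸ NormedRing.inverse_continuousAt u))
    |>.comp_continuousWithinAt (hA a ha)

theorem IsCompact.exists_bound_affine {P ι : Type*} [TopologicalSpace P] [Fintype ι]
    {T : Set P} (hT : IsCompact T) {a : P → ℝ} {w : ι → P → ℝ}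
    (ha : ContinuousOn a T) (hw : ∀ j, ContinuousOn (w j) T) :
    ∃ C₁ C₂ : ℝ, 0 ≤ C₁ ∧ 0 ≤ C₂ ∧
      ∀ p ∈ T, ∀ y : EuclideanSpace ℝ ι, |a p + ∑ j, w j p * y j| ≤ C₁ + C₂ * ‖y‖ := by
  obtain ⟨C₁, hC₁⟩ := hT.exists_bound_of_continuousOn ha
  choose C hC using fun j => hT.exists_bound_of_continuousOn (hw j)
  refine ⟨max C₁ 0, ∑ j, max (C j) 0, le_max_right _ _, by positivity, fun p hp y => ?_⟩
  calc |a p + ∑ j, w j p * y j| ≤ ‖a p‖ + ∑ j, ‖w j p‖ * ‖y j‖ := by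
        refine (abs_add_le _ _).trans (add_le_add le_rfl ?_)
        simpa only [Real.norm_eq_abs, abs_mul] using
          Finset.abs_sum_le_sum_abs (fun j => w j p * y j) Finset.univ
    _ ≤ max C₁ 0 + ∑ j, max (C j) 0 * ‖y‖ := by
        gcongr with j
        · exact (hC₁ p hp).trans (le_max_left _ _)
        · exact (hC j p hp).trans (le_max_left _ _)
        · exact PiLp.norm_apply_le y j
    _ = max C₁ 0 + (∑ j, max (C j) 0) * ‖y‖ := by rw [Finset.sum_mul]

section Kriging

variable {E ι : Type*} [Fintype ι] [DecidableEq ι]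

noncomputable def krigingWeight (K : E → E → ℝ) (x : E) (X : ι → E) (j : ι) : ℝ :=
  ∑ i, K x (X i) * (Matrix.of fun i j => K (X i) (X j))⁻¹ i j

theorem continuousOn_krigingWeight [TopologicalSpace E] {K : E → E → ℝ}
    (hK : Continuous fun p : E × E => K p.1 p.2) {S : Set (ι → E)}
    (hinv : ∀ X ∈ S, IsUnit (Matrix.of fun i j => K (X i) (X j)).det) (j : ι) :
    ContinuousOn (fun p : E × (ι → E) => krigingWeight K p.1 p.2 j) (Set.univ ×ˢ S) := by
  have hgram : Continuous fun X : ι → E => Matrix.of fun i j => K (X i) (X j) :=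
    continuous_matrix fun i j =>
      hK.comp (f := fun X : ι → E => (X i, X j)) ((continuous_apply i).prodMk (continuous_apply j))
  have hgramInv := (hgram.continuousOn.matrix_inv hinv).comp
    (continuous_snd.continuousOn (s := (Set.univ : Set E) ×ˢ S)) fun _ hp => hp.2
  refine continuousOn_finsetSum _ fun i _ => ContinuousOn.mul ?_
    ((continuous_id.matrix_elem i j).comp_continuousOn hgramInv)
  exact (hK.comp (continuous_fst.prodMk ((continuous_apply i).comp continuous_snd))).continuousOn

end Kriging

theorem postMean_eq_add_sum_krigingWeight {d q : ℕ} (μ : EuclideanSpace ℝ (Fin d) → ℝ)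
    (K : EuclideanSpace ℝ (Fin d) → EuclideanSpace ℝ (Fin d) → ℝ)
    (x : EuclideanSpace ℝ (Fin d)) (X : Fin q → EuclideanSpace ℝ (Fin d))
    (y : EuclideanSpace ℝ (Fin q)) :
    postMean μ K x X y = (μ x - ∑ j, krigingWeight K x X j * μ (X j)) +
      ∑ j, krigingWeight K x X j * y j := by
  simp only [postMean, krigingWeight, Finset.sum_mul, mul_sub, Finset.sum_sub_distrib]
  rw [Finset.sum_comm (f := fun i j => _ * y j), Finset.sum_comm (f := fun i j => _ * μ (X j))]
  ring

theorem stmt_7_general {d q : ℕ}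
    (A : Set (EuclideanSpace ℝ (Fin d))) (S : Set (Fin q → EuclideanSpace ℝ (Fin d)))
    (hA : IsCompact A) (hS : IsCompact S)
    (μ : EuclideanSpace ℝ (Fin d) → ℝ) (hμ : Continuous μ)
    (K : EuclideanSpace ℝ (Fin d) → EuclideanSpace ℝ (Fin d) → ℝ)
    (hK : Continuous fun p : EuclideanSpace ℝ (Fin d) × EuclideanSpace ℝ (Fin d) => K p.1 p.2)
    (hinv : ∀ X ∈ S, IsUnit (Matrix.of fun i j => K (X i) (X j)).det) :
    ∃ C₁ C₂ : ℝ, 0 ≤ C₁ ∧ 0 ≤ C₂ ∧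
      ∀ x ∈ A, ∀ X ∈ S, ∀ y : EuclideanSpace ℝ (Fin q),
        |postMean μ K x X y| ≤ C₁ + C₂ * ‖y‖ := by
  have hw (j : Fin q) := (continuousOn_krigingWeight hK hinv j).mono
    (Set.prod_mono (Set.subset_univ A) le_rfl)
  have ha : ContinuousOn (fun p : EuclideanSpace ℝ (Fin d) × (Fin q → EuclideanSpace ℝ (Fin d)) =>
      μ p.1 - ∑ j, krigingWeight K p.1 p.2 j * μ (p.2 j)) (A ×ˢ S) :=
    (hμ.comp continuous_fst).continuousOn.sub <| continuousOn_finsetSum _ fun j _ =>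
      (hw j).mul (hμ.comp ((continuous_apply j).comp continuous_snd)).continuousOn
  obtain ⟨C₁, C₂, hC₁, hC₂, hbound⟩ := (hA.prod hS).exists_bound_affine ha hw
  refine ⟨C₁, C₂, hC₁, hC₂, fun x hx X hX y => ?_⟩
  rw [postMean_eq_add_sum_krigingWeight]
  exact hbound (x, X) ⟨hx, hX⟩ y

/-- Bound on the GP posterior mean (first bound of Lemma 1): uniformly over compact sets
of evaluation points and batch locations, `|m(x, X, y)| ≤ C₁ + C₂ ‖y‖`. -/
theorem stmt_7 {d q : ℕ} (hd : 1 ≤ d) (hq : 1 ≤ q)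
    (A : Set (EuclideanSpace ℝ (Fin d))) (S : Set (Fin q → EuclideanSpace ℝ (Fin d)))
    (hA : IsCompact A) (hS : IsCompact S)
    (μ : EuclideanSpace ℝ (Fin d) → ℝ) (hμ : Continuous μ)
    (K : EuclideanSpace ℝ (Fin d) → EuclideanSpace ℝ (Fin d) → ℝ)
    (hK : Continuous fun p : EuclideanSpace ℝ (Fin d) × EuclideanSpace ℝ (Fin d) => K p.1 p.2)
    (hinv : ∀ X ∈ S, IsUnit (Matrix.of fun i j => K (X i) (X j)).det) :
    ∃ C₁ C₂ : ℝ, 0 ≤ C₁ ∧ 0 ≤ C₂ ∧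
      ∀ x ∈ A, ∀ X ∈ S, ∀ y : EuclideanSpace ℝ (Fin q),
        |postMean μ K x X y| ≤ C₁ + C₂ * ‖y‖ :=
  stmt_7_general A S hA hS μ hμ K hK hinv
end

section
/- Let d, q ≥ 1 be natural numbers, let A ⊆ ℝ^d and S ⊆ (Fin q → ℝ^d) be compact sets, let K : ℝ^d → ℝ^d → ℝ be continuously differentiable, and suppose that for every X ∈ S the q×q matrix K(X,X) with entries K(X_i, X_j) is invertible. Define the posterior variance v(x, X) = K(x,x) − Σ_{i,j} K(x, X_i)·(K(X,X)⁻¹)_{ij}·K(X_j, x). Then there exists a constant C₁ ≥ 0 such that for all x ∈ A and X ∈ S, the map X' ↦ v(x, X') is differentiable at X and the operator norm of its Fréchet derivative at X is at most C₁. -/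
/-!
On the open set where `K(X,X)` is invertible, Cramer's rule writes the entries of `K(X,X)⁻¹`
as `C¹` functions (cofactors over the determinant), so `(x, X) ↦ v(x, X)` is jointly `C¹` there.
Its derivative is then continuous, hence bounded on the compact set `A ×ˢ S`, and the derivative
in `X` alone is this joint derivative restricted to the second factor.
-/

open scoped BigOperators

/-- The Gaussian process posterior variance at `x` with kernel `K`, conditioned on
observations at the batch of points `X`:
`v(x, X) = K(x,x) - Σᵢⱼ K(x, Xᵢ) (K(X,X)⁻¹)ᵢⱼ K(Xⱼ, x)`. -/
noncomputable def postVar {d q : ℕ}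
    (K : EuclideanSpace ℝ (Fin d) → EuclideanSpace ℝ (Fin d) → ℝ)
    (x : EuclideanSpace ℝ (Fin d)) (X : Fin q → EuclideanSpace ℝ (Fin d)) : ℝ :=
  K x x - ∑ i, ∑ j,
    K x (X i) * ((Matrix.of fun i j => K (X i) (X j))⁻¹ i j) * K (X j) x

section MatrixEntries

variable {𝕜 P n : Type*} [NontriviallyNormedField 𝕜] [NormedAddCommGroup P] [NormedSpace 𝕜 P]
  [Fintype n] [DecidableEq n] {k : WithTop ℕ∞} {M : P → Matrix n n 𝕜}

theorem ContDiff.matrix_det (hM : ∀ i j, ContDiff 𝕜 k fun p => M p i j) :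
    ContDiff 𝕜 k fun p => (M p).det := by
  simp only [Matrix.det_apply']
  exact ContDiff.sum fun σ _ => contDiff_const.mul (contDiff_prod fun i _ => hM (σ i) i)

theorem ContDiff.matrix_adjugate_apply (hM : ∀ i j, ContDiff 𝕜 k fun p => M p i j) (i j : n) :
    ContDiff 𝕜 k fun p => (M p).adjugate i j := by
  simp only [Matrix.adjugate_apply]
  refine ContDiff.matrix_det fun a b => ?_
  simp only [Matrix.updateRow_apply]
  split_ifs
  · exact contDiff_const
  · exact hM a b

theorem ContDiff.contDiffAt_matrix_inv_apply (hM : ∀ i j, ContDiff 𝕜 k fun p => M p i j)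
    {p : P} (hp : (M p).det ≠ 0) (i j : n) :
    ContDiffAt 𝕜 k (fun p => (M p)⁻¹ i j) p := by
  simp only [Matrix.inv_def, Ring.inverse_eq_inv', Matrix.smul_apply, smul_eq_mul]
  exact ((ContDiff.matrix_det hM).contDiffAt.inv hp).mul
    (ContDiff.matrix_adjugate_apply hM i j).contDiffAt

end MatrixEntries

section Derivatives

variable {𝕜 E F G : Type*} [NontriviallyNormedField 𝕜]
  [NormedAddCommGroup E] [NormedSpace 𝕜 E] [NormedAddCommGroup F] [NormedSpace 𝕜 F]
  [NormedAddCommGroup G] [NormedSpace 𝕜 G]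

theorem IsCompact.exists_bound_norm_fderiv {f : E → F} {s : Set E} (hs : IsCompact s)
    (hf : ∀ x ∈ s, ContDiffAt 𝕜 1 f x) : ∃ C, ∀ x ∈ s, ‖fderiv 𝕜 f x‖ ≤ C :=
  hs.exists_bound_of_continuousOn fun x hx =>
    ((hf x hx).continuousAt_fderiv one_ne_zero).continuousWithinAt

theorem DifferentiableAt.norm_fderiv_comp_prodMk_le {f : E × F → G} {x : E} {y : F}
    (hf : DifferentiableAt 𝕜 f (x, y)) :
    ‖fderiv 𝕜 (fun y' => f (x, y')) y‖ ≤ ‖fderiv 𝕜 f (x, y)‖ := by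
  rw [show (fun y' => f (x, y')) = f ∘ Prod.mk x from rfl,
    (hf.hasFDerivAt.comp y (hasFDerivAt_prodMk_right x y)).fderiv]
  calc ‖(fderiv 𝕜 f (x, y)).comp (ContinuousLinearMap.inr 𝕜 E F)‖
      ≤ ‖fderiv 𝕜 f (x, y)‖ * ‖ContinuousLinearMap.inr 𝕜 E F‖ :=
        ContinuousLinearMap.opNorm_comp_le _ _
    _ ≤ ‖fderiv 𝕜 f (x, y)‖ :=
        mul_le_of_le_one_right (norm_nonneg _) (ContinuousLinearMap.norm_inr_le_one 𝕜 E F)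

end Derivatives

theorem contDiffAt_postVar {d q : ℕ} {n : WithTop ℕ∞}
    {K : EuclideanSpace ℝ (Fin d) → EuclideanSpace ℝ (Fin d) → ℝ}
    (hK : ContDiff ℝ n fun p : EuclideanSpace ℝ (Fin d) × EuclideanSpace ℝ (Fin d) => K p.1 p.2)
    {x : EuclideanSpace ℝ (Fin d)} {X : Fin q → EuclideanSpace ℝ (Fin d)}
    (hX : (Matrix.of fun i j => K (X i) (X j)).det ≠ 0) :
    ContDiffAt ℝ n (fun p : EuclideanSpace ℝ (Fin d) × (Fin q → EuclideanSpace ℝ (Fin d)) =>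
      postVar K p.1 p.2) (x, X) := by
  have hK_comp : ∀ {a b : EuclideanSpace ℝ (Fin d) × (Fin q → EuclideanSpace ℝ (Fin d)) →
      EuclideanSpace ℝ (Fin d)}, ContDiff ℝ n a → ContDiff ℝ n b →
      ContDiff ℝ n fun p => K (a p) (b p) :=
    fun ha hb => hK.comp (ha.prodMk hb)
  have hX_apply : ∀ i, ContDiff ℝ n fun p :
      EuclideanSpace ℝ (Fin d) × (Fin q → EuclideanSpace ℝ (Fin d)) => p.2 i :=
    fun i => (contDiff_apply ℝ _ i).comp contDiff_snd
  have hinv := ContDiff.contDiffAt_matrix_inv_apply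
    (M := fun p => Matrix.of fun i j => K (p.2 i) (p.2 j))
    (fun i j => hK_comp (hX_apply i) (hX_apply j)) (p := (x, X)) hX
  exact (hK_comp contDiff_fst contDiff_fst).contDiffAt.sub <|
    ContDiffAt.sum fun i _ => ContDiffAt.sum fun j _ =>
      ((hK_comp contDiff_fst (hX_apply i)).contDiffAt.mul (hinv i j)).mul
        (hK_comp (hX_apply j) contDiff_fst).contDiffAt

theorem stmt_10_general {d q : ℕ}
    (A : Set (EuclideanSpace ℝ (Fin d))) (S : Set (Fin q → EuclideanSpace ℝ (Fin d)))
    (hA : IsCompact A) (hS : IsCompact S)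
    (K : EuclideanSpace ℝ (Fin d) → EuclideanSpace ℝ (Fin d) → ℝ)
    (hK : ContDiff ℝ 1 fun p : EuclideanSpace ℝ (Fin d) × EuclideanSpace ℝ (Fin d) => K p.1 p.2)
    (hinv : ∀ X ∈ S, IsUnit (Matrix.of fun i j => K (X i) (X j)).det) :
    ∃ C₁ : ℝ, 0 ≤ C₁ ∧
      ∀ x ∈ A, ∀ X ∈ S,
        DifferentiableAt ℝ (fun X' => postVar K x X') X ∧
        ‖fderiv ℝ (fun X' => postVar K x X') X‖ ≤ C₁ := by
  have hreg : ∀ p ∈ A ×ˢ S, ContDiffAt ℝ 1 (fun p => postVar K p.1 p.2) p :=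
    fun p hp => contDiffAt_postVar hK (hinv p.2 hp.2).ne_zero
  obtain ⟨C, hC⟩ := (hA.prod hS).exists_bound_norm_fderiv hreg
  refine ⟨max C 0, le_max_right _ _, fun x hx X hX => ?_⟩
  have hdiff := (hreg (x, X) ⟨hx, hX⟩).differentiableAt one_ne_zero
  exact ⟨hdiff.comp X ((differentiableAt_const x).prodMk differentiableAt_id),
    hdiff.norm_fderiv_comp_prodMk_le.trans ((hC _ ⟨hx, hX⟩).trans (le_max_left _ _))⟩

/-- Uniform bound on the gradient of the GP posterior variance with respect to the batch
locations (fourth bound of Lemma 1): for continuously differentiable `K`, uniformly over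
compact sets, `X' ↦ v(x, X')` is differentiable at `X` with `‖D_X v(x, X)‖ ≤ C₁`. -/
theorem stmt_10 {d q : ℕ} (hd : 1 ≤ d) (hq : 1 ≤ q)
    (A : Set (EuclideanSpace ℝ (Fin d))) (S : Set (Fin q → EuclideanSpace ℝ (Fin d)))
    (hA : IsCompact A) (hS : IsCompact S)
    (K : EuclideanSpace ℝ (Fin d) → EuclideanSpace ℝ (Fin d) → ℝ)
    (hK : ContDiff ℝ 1 fun p : EuclideanSpace ℝ (Fin d) × EuclideanSpace ℝ (Fin d) => K p.1 p.2)
    (hinv : ∀ X ∈ S, IsUnit (Matrix.of fun i j => K (X i) (X j)).det) :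
    ∃ C₁ : ℝ, 0 ≤ C₁ ∧
      ∀ x ∈ A, ∀ X ∈ S,
        DifferentiableAt ℝ (fun X' => postVar K x X') X ∧
        ‖fderiv ℝ (fun X' => postVar K x X') X‖ ≤ C₁ :=
  stmt_10_general A S hA hS K hK hinv
end

section
/- Let X ⊆ ℝ^d be a nonempty compact set and f : ℝ × ℝ^d → ℝ. Suppose f is continuous on [0,1] × X, that for each x ∈ X the map t ↦ f(t, x) is differentiable on an open set containing [0,1], and that the partial derivative ∂f/∂t is continuous on [0,1] × X. Define V(t) = max_{x ∈ X} f(t, x) for t ∈ [0,1]. If t₀ ∈ (0,1) is a point at which V is differentiable and x* ∈ X satisfies f(t₀, x*) = V(t₀), then V'(t₀) = ∂f/∂t(t₀, x*). -/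
/-! Since `f(·, x*) ≤ V` on `[0,1]` with equality at the interior point `t₀`, the difference
`V - f(·, x*)` has a local minimum at `t₀`, so its derivative vanishes there. -/

open Filter Topology

noncomputable def valueFn {d : ℕ} (f : ℝ × EuclideanSpace ℝ (Fin d) → ℝ)
    (X : Set (EuclideanSpace ℝ (Fin d))) (t : ℝ) : ℝ :=
  sSup ((fun x => f (t, x)) '' X)

theorem HasDerivAt.eq_of_eventually_le_of_eq {V g : ℝ → ℝ} {V' g' t₀ : ℝ}
    (hV : HasDerivAt V V' t₀) (hg : HasDerivAt g g' t₀)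
    (hle : ∀ᶠ t in 𝓝 t₀, g t ≤ V t) (heq : g t₀ = V t₀) : V' = g' := by
  have hmin : IsLocalMin (fun t => V t - g t) t₀ :=
    hle.mono fun t ht => by simpa only [heq, sub_self, sub_nonneg] using ht
  exact sub_eq_zero.mp (hmin.hasDerivAt_eq_zero (hV.sub hg))

theorem le_valueFn {d : ℕ} {f : ℝ × EuclideanSpace ℝ (Fin d) → ℝ}
    {X : Set (EuclideanSpace ℝ (Fin d))} (hX : IsCompact X) {t : ℝ}
    (hcont : ContinuousOn (fun x => f (t, x)) X) {x : EuclideanSpace ℝ (Fin d)} (hx : x ∈ X) :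
    f (t, x) ≤ valueFn f X t :=
  le_csSup (hX.image_of_continuousOn hcont).bddAbove ⟨x, hx, rfl⟩

theorem stmt_14_general {d : ℕ} (X : Set (EuclideanSpace ℝ (Fin d)))
    (hX : IsCompact X) (f f' : ℝ × EuclideanSpace ℝ (Fin d) → ℝ)
    (hf : ContinuousOn f (Set.Icc (0 : ℝ) 1 ×ˢ X))
    (U : Set ℝ) (hUI : Set.Icc (0 : ℝ) 1 ⊆ U)
    (hdiff : ∀ x ∈ X, ∀ t ∈ U, HasDerivAt (fun s => f (s, x)) (f' (t, x)) t)
    (t₀ : ℝ) (ht₀ : t₀ ∈ Set.Ioo (0 : ℝ) 1)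
    (hV : DifferentiableAt ℝ (valueFn f X) t₀)
    (xstar : EuclideanSpace ℝ (Fin d)) (hxstar : xstar ∈ X)
    (hmax : f (t₀, xstar) = valueFn f X t₀) :
    deriv (valueFn f X) t₀ = f' (t₀, xstar) := by
  have hle : ∀ t ∈ Set.Icc (0 : ℝ) 1, f (t, xstar) ≤ valueFn f X t := fun t ht =>
    le_valueFn hX (hf.comp (continuousOn_const.prodMk continuousOn_id) fun _ hy => ⟨ht, hy⟩)
      hxstar
  have hIcc : Set.Icc (0 : ℝ) 1 ∈ 𝓝 t₀ := Icc_mem_nhds ht₀.1 ht₀.2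
  exact hV.hasDerivAt.eq_of_eventually_le_of_eq
    (hdiff xstar hxstar t₀ (hUI (Set.Ioo_subset_Icc_self ht₀)))
    (eventually_of_mem hIcc hle) hmax

/-- Envelope theorem, derivative formula (Milgrom–Segal): under the same regularity
hypotheses, if the value function `V(t) = max_{x ∈ X} f(t,x)` is differentiable at
`t₀ ∈ (0,1)` and `x* ∈ X` is a maximizer at `t₀`, then `V'(t₀) = f'(t₀, x*)`. -/
theorem stmt_14 {d : ℕ} (X : Set (EuclideanSpace ℝ (Fin d))) (hXne : X.Nonempty)
    (hX : IsCompact X) (f f' : ℝ × EuclideanSpace ℝ (Fin d) → ℝ)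
    (hf : ContinuousOn f (Set.Icc (0 : ℝ) 1 ×ˢ X))
    (U : Set ℝ) (hU : IsOpen U) (hUI : Set.Icc (0 : ℝ) 1 ⊆ U)
    (hdiff : ∀ x ∈ X, ∀ t ∈ U, HasDerivAt (fun s => f (s, x)) (f' (t, x)) t)
    (hf' : ContinuousOn f' (Set.Icc (0 : ℝ) 1 ×ˢ X))
    (t₀ : ℝ) (ht₀ : t₀ ∈ Set.Ioo (0 : ℝ) 1)
    (hV : DifferentiableAt ℝ (valueFn f X) t₀)
    (xstar : EuclideanSpace ℝ (Fin d)) (hxstar : xstar ∈ X)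
    (hmax : f (t₀, xstar) = valueFn f X t₀) :
    deriv (valueFn f X) t₀ = f' (t₀, xstar) :=
  stmt_14_general X hX f f' hf U hUI hdiff t₀ ht₀ hV xstar hxstar hmax
end
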